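/- Let R be a Cohen–Macaulay local ring with regular sequence x_1, …, x_d and let t ≥ 2. Set J = (x_1^t, x_2^t, x_3, …, x_d). Then (J : (x_1, x_2)) = (x_1^t, x_2^t, x_3, …, x_d, (x_1 x_2)^{t-1}). -/

import Mathlib

/-!
In a Noetherian local ring a regular sequence inside the maximal ideal stays regular under any
permutation, so `a = x 0`, `b = x 1` is a regular sequence modulo `I = (x 2, …, x (d-1))`. The
colon ideal is then computed for any such pair: cancelling `a` from `a r ∈ I + (a^t, b^t)` gives
`r ∈ I + (a^(t-1), b^t)`, and cancelling `a^(t-1)` from the resulting relation for `b r` (which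
needs `b^t` regular modulo `I + (a^(t-1))`) produces the extra generator `(ab)^(t-1)`.
-/

/-- `x 0, …, x (d-1)` is a regular sequence: the ideal it generates is proper and each
`x i` is a non-zerodivisor modulo the ideal generated by the previous ones. -/
def IsRegSeq {R : Type*} [CommRing R] {d : ℕ} (x : Fin d → R) : Prop :=
  Ideal.span (Set.range x) ≠ ⊤ ∧
    ∀ i : Fin d, ∀ r : R,
      r * x i ∈ Ideal.span (x '' Set.Iio i) → r ∈ Ideal.span (x '' Set.Iio i)

/-- A Noetherian local ring is Cohen–Macaulay iff it admits a system of parameters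
(of length equal to its Krull dimension, inside the maximal ideal) that is a regular
sequence. -/
def IsCohenMacaulayLocalRing (R : Type*) [CommRing R] [IsLocalRing R] : Prop :=
  ∃ (d : ℕ) (x : Fin d → R), (∀ i, x i ∈ IsLocalRing.maximalIdeal R) ∧ IsRegSeq x ∧
    (d : WithBot (WithTop ℕ)) = ringKrullDim R

open Ideal RingTheory.Sequence

section RegularPair

variable {R : Type*} [CommRing R] {I : Ideal R}

theorem mem_sup_span_singleton_iff {u r : R} :
    r ∈ I ⊔ span {u} ↔ ∃ s, r - s * u ∈ I := by
  simp only [Submodule.mem_sup, mem_span_singleton']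
  constructor
  · rintro ⟨y, hy, _, ⟨s, rfl⟩, rfl⟩
    exact ⟨s, by simpa using hy⟩
  · rintro ⟨s, h⟩
    exact ⟨_, h, _, ⟨s, rfl⟩, sub_add_cancel r _⟩

theorem mem_sup_span_pair_iff {u v r : R} :
    r ∈ I ⊔ span {u, v} ↔ ∃ p q, r - p * u - q * v ∈ I := by
  simp only [Submodule.mem_sup, mem_span_pair]
  constructor
  · rintro ⟨y, hy, _, ⟨p, q, rfl⟩, rfl⟩
    exact ⟨p, q, by convert hy using 1; ring⟩
  · rintro ⟨p, q, h⟩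
    exact ⟨_, h, _, ⟨p, q, rfl⟩, by ring⟩

theorem IsSMulRegular.quotient_sup_span_pow {u v : R} (hu : IsSMulRegular (R ⧸ I) u)
    (hv : IsSMulRegular (R ⧸ (I ⊔ span {u})) v) (k : ℕ) :
    IsSMulRegular (R ⧸ (I ⊔ span {u ^ k})) v := by
  rw [isSMulRegular_quotient_iff_mem_of_smul_mem] at hv ⊢
  induction k with
  | zero => simp
  | succ k ih =>
    intro r hr
    obtain ⟨s, hs⟩ := mem_sup_span_singleton_iff.1 hr
    obtain ⟨s', hs'⟩ := mem_sup_span_singleton_iff.1 <|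
      hv r (mem_sup_span_singleton_iff.2 ⟨s * u ^ k, by convert hs using 2; ring⟩)
    have h : u * (v * s' - s * u ^ k) ∈ I := by
      convert I.sub_mem hs (I.mul_mem_left v hs') using 1; ring
    obtain ⟨w, hw⟩ := mem_sup_span_singleton_iff.1 <|
      ih s' (mem_sup_span_singleton_iff.2 ⟨s, mem_of_isSMulRegular_quotient_of_smul_mem hu h⟩)
    refine mem_sup_span_singleton_iff.2 ⟨w, ?_⟩
    convert I.add_mem hs' (I.mul_mem_left u hw) using 1; ring

theorem mem_sup_span_pair_of_mul_mem {u v w r : R} (hu : IsSMulRegular (R ⧸ I) u)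
    (hv : IsSMulRegular (R ⧸ (I ⊔ span {u})) v) (h : u * r ∈ I ⊔ span {u * w, v}) :
    r ∈ I ⊔ span {w, v} := by
  obtain ⟨p, q, hpq⟩ := mem_sup_span_pair_iff.1 h
  have hvq : v * q ∈ I ⊔ span {u} :=
    mem_sup_span_singleton_iff.2 ⟨r - p * w, by convert I.neg_mem hpq using 1; ring⟩
  obtain ⟨q', hq'⟩ := mem_sup_span_singleton_iff.1 (mem_of_isSMulRegular_quotient_of_smul_mem hv hvq)
  have hu' : u * (r - p * w - q' * v) ∈ I := by
    convert I.add_mem hpq (I.mul_mem_left v hq') using 1; ring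
  exact mem_sup_span_pair_iff.2 ⟨p, q', mem_of_isSMulRegular_quotient_of_smul_mem hu hu'⟩

theorem colon_sup_span_pow_pair {a b : R} (ha : IsSMulRegular (R ⧸ I) a)
    (hb : IsSMulRegular (R ⧸ (I ⊔ span {a})) b) (m n : ℕ) :
    (I ⊔ span {a ^ (m + 1), b ^ (n + 1)}).colon (span {a, b}) =
      I ⊔ span {a ^ (m + 1), b ^ (n + 1)} ⊔ span {a ^ m * b ^ n} := by
  set K := I ⊔ span {a ^ (m + 1), b ^ (n + 1)}
  have hbK : b ^ (n + 1) ∈ K := mem_sup_right (subset_span (by simp))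
  apply le_antisymm
  · intro r hr
    simp only [colon_span, Submodule.mem_colon, Set.mem_insert_iff, Set.mem_singleton_iff,
      forall_eq_or_imp, forall_eq, smul_eq_mul] at hr
    obtain ⟨hra, hrb⟩ := hr
    obtain ⟨u, v, huv⟩ := mem_sup_span_pair_iff.1 <| mem_sup_span_pair_of_mul_mem ha (hb.pow _)
      (show a * r ∈ I ⊔ span {a * a ^ m, b ^ (n + 1)} by rw [← pow_succ', mul_comm]; exact hra)
    have hbu : a ^ m * (b * u) ∈ I ⊔ span {a ^ m * a, b ^ (n + 1)} := by
      rw [← pow_succ]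
      convert K.sub_mem (K.sub_mem (mul_comm r b ▸ hrb) (mem_sup_left (I.mul_mem_left b huv)))
        (K.mul_mem_left (b * v) hbK) using 1
      ring
    obtain ⟨c, e, hce⟩ := mem_sup_span_pair_iff.1 <| mem_sup_span_pair_of_mul_mem (ha.pow m)
      ((ha.quotient_sup_span_pow hb m).pow _) hbu
    have hbe : b * (u - e * b ^ n) ∈ I ⊔ span {a} :=
      mem_sup_span_singleton_iff.2 ⟨c, by convert hce using 1; ring⟩
    obtain ⟨w, hw⟩ :=
      mem_sup_span_singleton_iff.1 (mem_of_isSMulRegular_quotient_of_smul_mem hb hbe)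
    refine mem_sup_span_singleton_iff.2 ⟨e, mem_sup_span_pair_iff.2 ⟨w, v, ?_⟩⟩
    convert I.add_mem huv (I.mul_mem_left (a ^ m) hw) using 1
    ring
  · refine sup_le le_colon (span_le.2 ?_)
    simp only [Set.singleton_subset_iff, SetLike.mem_coe, colon_span, Submodule.mem_colon,
      Set.mem_insert_iff, Set.mem_singleton_iff, forall_eq_or_imp, forall_eq, smul_eq_mul]
    exact ⟨mem_sup_right (mem_span_pair.2 ⟨b ^ n, 0, by ring⟩),
      mem_sup_right (mem_span_pair.2 ⟨0, a ^ m, by ring⟩)⟩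

end RegularPair

section RegularSequence

variable {R : Type*} [CommRing R]

theorem IsRegSeq.isWeaklyRegular_ofFn {d : ℕ} {x : Fin d → R} (hx : IsRegSeq x) :
    IsWeaklyRegular R (List.ofFn x) := by
  refine ⟨fun i hi => ?_⟩
  have hi' : i < d := by simpa using hi
  have hprefix : ofList ((List.ofFn x).take i) = span (x '' Set.Iio ⟨i, hi'⟩) := by
    refine congrArg span (Set.ext fun r => ?_)
    simp only [Set.mem_ofPred_eq, List.mem_take_iff_getElem, List.getElem_ofFn, Set.mem_image,
      Set.mem_Iio, Fin.lt_def]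
    constructor
    · rintro ⟨j, hj, rfl⟩
      exact ⟨⟨j, by omega⟩, by show j < i; omega, rfl⟩
    · rintro ⟨j, hj, rfl⟩
      exact ⟨j, lt_min hj (by simp), rfl⟩
  rw [List.getElem_ofFn, smul_eq_mul, mul_top, hprefix, isSMulRegular_quotient_iff_mem_of_smul_mem]
  exact fun r hr => hx.2 _ r (by rwa [mul_comm])

theorem isSMulRegular_of_isWeaklyRegular_append_pair {l : List R} {a b : R}
    (h : IsWeaklyRegular R (l ++ [a, b])) :
    IsSMulRegular (R ⧸ ofList l) a ∧ IsSMulRegular (R ⧸ (ofList l ⊔ span {a})) b := by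
  have ha := h.regular_mod_prev l.length (by simp)
  have hb := h.regular_mod_prev (l.length + 1) (by simp)
  rw [List.take_left, smul_eq_mul, mul_top] at ha
  rw [List.take_length_add_append, smul_eq_mul, mul_top, ofList_append, List.take_one,
    List.head?_cons, Option.toList_some, ofList_singleton] at hb
  exact ⟨by simpa using ha, by simpa using hb⟩

theorem IsRegSeq.isSMulRegular_first_two_mod_rest [IsNoetherianRing R] [IsLocalRing R] {n : ℕ}
    {x : Fin (n + 2) → R} (hx : IsRegSeq x) :
    IsSMulRegular (R ⧸ ofList (List.ofFn fun i : Fin n => x i.succ.succ)) (x 0) ∧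
      IsSMulRegular (R ⧸ (ofList (List.ofFn fun i : Fin n => x i.succ.succ) ⊔ span {x 0}))
        (x 1) := by
  have hperm : (List.ofFn x).Perm ((List.ofFn fun i : Fin n => x i.succ.succ) ++ [x 0, x 1]) := by
    rw [List.ofFn_succ, List.ofFn_succ]
    exact List.perm_append_comm (l₁ := [x 0, x 1])
  refine isSMulRegular_of_isWeaklyRegular_append_pair <|
    IsLocalRing.isWeaklyRegular_of_perm_of_subset_maximalIdeal hx.isWeaklyRegular_ofFn hperm
      fun r hr => IsLocalRing.le_maximalIdeal hx.1 (subset_span (List.mem_ofFn.1 hr))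

end RegularSequence

/-- in a CM local ring with regular sequence `x_1, …, x_d` and `t ≥ 2`,
for `J = (x_1^t, x_2^t, x_3, …, x_d)` one has
`(J : (x_1, x_2)) = (x_1^t, x_2^t, x_3, …, x_d, (x_1 x_2)^{t-1})`. -/
theorem stmt9 {R : Type*} [CommRing R] [IsNoetherianRing R] [IsLocalRing R]
    {d : ℕ} (hd : 2 ≤ d) (x : Fin d → R)
    (hreg : IsRegSeq x) (t : ℕ) (ht : 2 ≤ t) (J : Ideal R)
    (hJ : J = Ideal.span (Set.range fun j : Fin d => if (j : ℕ) < 2 then x j ^ t else x j)) :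
    J.colon (Ideal.span {x ⟨0, by omega⟩, x ⟨1, by omega⟩}) =
      J ⊔ Ideal.span {(x ⟨0, by omega⟩ * x ⟨1, by omega⟩) ^ (t - 1)} := by
  obtain ⟨n, rfl⟩ : ∃ n, d = n + 2 := ⟨d - 2, by omega⟩
  obtain ⟨k, rfl⟩ : ∃ k, t = k + 1 := ⟨t - 1, by omega⟩
  obtain ⟨ha, hb⟩ := hreg.isSMulRegular_first_two_mod_rest
  have hJ' : J = ofList (List.ofFn fun i : Fin n => x i.succ.succ) ⊔
      span {x 0 ^ (k + 1), x 1 ^ (k + 1)} := by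
    have hrange : ∀ f : Fin (n + 2) → R, span (Set.range f) = ofList (List.ofFn f) :=
      fun f => congrArg span (Set.ext fun r => List.mem_ofFn.symm)
    rw [hJ, hrange]
    simp [List.ofFn_succ, span_insert, sup_comm, sup_assoc]
  rw [hJ', Nat.add_sub_cancel, mul_pow]
  exact colon_sup_span_pow_pair ha hb k k
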